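/- Let B be a symmetric positive definite n×n real matrix, let v, r ∈ ℝⁿ, and let δ > 0 be such that the corrected gradient variation r̃ := r − δv satisfies vᵀr̃ > 0. Then the matrix B₊ − δI, where B₊ := B + (r̃ r̃ᵀ)/(vᵀ r̃) − (B v vᵀ B)/(vᵀ B v) + δI is the regularized BFGS update, is symmetric positive definite; in particular all eigenvalues of B₊ are strictly larger than δ. -/

import Mathlib

open Matrix

/-!
Writing `c = sᵀBs`, the quadratic form of the BFGS update is
`xᵀBx - (xᵀBs)² / c + (yᵀx)² / (sᵀy)`. Off the line through `s` the strict Cauchy–Schwarz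
inequality for the inner product defined by `B` makes the first two terms positive; on that line
they cancel, and the last term is positive by the curvature condition `sᵀy > 0`. Subtracting `δI`
from the regularized update leaves the BFGS update of `B` with the corrected pair `(v, r - δv)`.
-/

noncomputable def bfgsUpdate {ι : Type*} [Fintype ι] (B : Matrix ι ι ℝ) (s y : ι → ℝ) :
    Matrix ι ι ℝ :=
  B + (s ⬝ᵥ y)⁻¹ • vecMulVec y y - (s ⬝ᵥ B *ᵥ s)⁻¹ • vecMulVec (B *ᵥ s) (B *ᵥ s)

namespace Matrix

variable {ι : Type*} [Fintype ι] {B : Matrix ι ι ℝ}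

lemma IsSymm.dotProduct_mulVec_comm (hB : B.IsSymm) (x y : ι → ℝ) :
    x ⬝ᵥ B *ᵥ y = y ⬝ᵥ B *ᵥ x := by
  rw [dotProduct_mulVec, ← mulVec_transpose, hB.eq, dotProduct_comm]

lemma IsSymm.dotProduct_mulVec_sub_smul (hB : B.IsSymm) (x v : ι → ℝ) (t : ℝ) :
    (x - t • v) ⬝ᵥ B *ᵥ (x - t • v)
      = x ⬝ᵥ B *ᵥ x - 2 * t * (x ⬝ᵥ B *ᵥ v) + t ^ 2 * (v ⬝ᵥ B *ᵥ v) := by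
  simp only [mulVec_sub, mulVec_smul, sub_dotProduct, dotProduct_sub, smul_dotProduct,
    dotProduct_smul, smul_eq_mul, hB.dotProduct_mulVec_comm v x]
  ring

lemma PosDef.sq_dotProduct_mulVec_lt (hB : B.PosDef) {x v : ι → ℝ} (hv : v ≠ 0)
    (hx : ∀ t : ℝ, x ≠ t • v) :
    (x ⬝ᵥ B *ᵥ v) ^ 2 < (x ⬝ᵥ B *ᵥ x) * (v ⬝ᵥ B *ᵥ v) := by
  have hc : 0 < v ⬝ᵥ B *ᵥ v := by simpa using hB.dotProduct_mulVec_pos hv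
  set t := (x ⬝ᵥ B *ᵥ v) / (v ⬝ᵥ B *ᵥ v)
  have hw : 0 < (x - t • v) ⬝ᵥ B *ᵥ (x - t • v) := by
    simpa using hB.dotProduct_mulVec_pos (sub_ne_zero.mpr (hx t))
  rw [(isHermitian_iff_isSymm.mp hB.isHermitian).dotProduct_mulVec_sub_smul] at hw
  have ht : x ⬝ᵥ B *ᵥ v = t * (v ⬝ᵥ B *ᵥ v) := (div_mul_cancel₀ _ hc.ne').symm
  rw [ht] at hw ⊢
  nlinarith [mul_pos hw hc]

lemma dotProduct_bfgsUpdate_mulVec (s y x : ι → ℝ) :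
    x ⬝ᵥ bfgsUpdate B s y *ᵥ x
      = x ⬝ᵥ B *ᵥ x + (y ⬝ᵥ x) ^ 2 / (s ⬝ᵥ y) - (x ⬝ᵥ B *ᵥ s) ^ 2 / (s ⬝ᵥ B *ᵥ s) := by
  simp only [bfgsUpdate, sub_mulVec, add_mulVec, smul_mulVec, vecMulVec_mulVec, dotProduct_sub,
    dotProduct_add, dotProduct_smul, smul_eq_mul, op_smul_eq_smul]
  rw [dotProduct_comm x y, dotProduct_comm x (B *ᵥ s)]
  ring

omit [Fintype ι] in
lemma isSymm_vecMulVec_self (u : ι → ℝ) : (vecMulVec u u).IsSymm := by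
  simp [IsSymm, transpose_vecMulVec]

lemma IsSymm.bfgsUpdate (hB : B.IsSymm) (s y : ι → ℝ) : (bfgsUpdate B s y).IsSymm :=
  (hB.add ((isSymm_vecMulVec_self y).smul _)).sub ((isSymm_vecMulVec_self _).smul _)

lemma PosDef.bfgsUpdate (hB : B.PosDef) {s y : ι → ℝ} (hsy : 0 < s ⬝ᵥ y) :
    (bfgsUpdate B s y).PosDef := by
  have hBsymm : B.IsSymm := isHermitian_iff_isSymm.mp hB.isHermitian
  refine .of_dotProduct_mulVec_pos (isHermitian_iff_isSymm.mpr (hBsymm.bfgsUpdate s y))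
    fun x hx ↦ ?_
  have hs : s ≠ 0 := by rintro rfl; simp at hsy
  have hc : 0 < s ⬝ᵥ B *ᵥ s := by simpa using hB.dotProduct_mulVec_pos hs
  rw [star_trivial, dotProduct_bfgsUpdate_mulVec]
  by_cases hpar : ∃ t : ℝ, x = t • s
  · obtain ⟨t, rfl⟩ := hpar
    have ht : t ≠ 0 := by rintro rfl; simp at hx
    have hvalue : t • s ⬝ᵥ B *ᵥ (t • s) + (y ⬝ᵥ t • s) ^ 2 / (s ⬝ᵥ y)
        - (t • s ⬝ᵥ B *ᵥ s) ^ 2 / (s ⬝ᵥ B *ᵥ s) = t ^ 2 * (s ⬝ᵥ y) := by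
      simp only [mulVec_smul, smul_dotProduct, dotProduct_smul, smul_eq_mul]
      rw [dotProduct_comm y s]
      field_simp
      ring
    rw [hvalue]
    exact mul_pos (by positivity) hsy
  · push Not at hpar
    have hcs : (x ⬝ᵥ B *ᵥ s) ^ 2 / (s ⬝ᵥ B *ᵥ s) < x ⬝ᵥ B *ᵥ x := by
      rw [div_lt_iff₀ hc]
      exact hB.sq_dotProduct_mulVec_lt hs hpar
    have hcurv : 0 ≤ (y ⬝ᵥ x) ^ 2 / (s ⬝ᵥ y) := by positivity
    linarith

end Matrix

theorem regularized_bfgs_update_posdef_general {n : ℕ}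
    (B : Matrix (Fin n) (Fin n) ℝ) (hB : B.PosDef)
    (v r : Fin n → ℝ) (δ : ℝ)
    (hcurv : 0 < v ⬝ᵥ (r - δ • v)) :
    ((B + (v ⬝ᵥ (r - δ • v))⁻¹ • vecMulVec (r - δ • v) (r - δ • v)
        - (v ⬝ᵥ B *ᵥ v)⁻¹ • vecMulVec (B *ᵥ v) (B *ᵥ v)
        + δ • (1 : Matrix (Fin n) (Fin n) ℝ))
      - δ • (1 : Matrix (Fin n) (Fin n) ℝ)).PosDef := by
  rw [add_sub_cancel_right]
  exact hB.bfgsUpdate hcurv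

/-- **Eigenvalue lower bound for the regularized BFGS update.**
For a symmetric positive definite matrix `B`, vectors `v, r`, and `δ > 0` with
`vᵀ(r - δv) > 0`, the regularized BFGS update
`B₊ = B + (r̃r̃ᵀ)/(vᵀr̃) - (Bvvᵀ B)/(vᵀBv) + δI` (where `r̃ = r - δv`)
is such that `B₊ - δI` is (symmetric) positive definite, i.e. all eigenvalues
of `B₊` are strictly larger than `δ`. -/
theorem regularized_bfgs_update_posdef {n : ℕ}
    (B : Matrix (Fin n) (Fin n) ℝ) (hB : B.PosDef)
    (v r : Fin n → ℝ) (δ : ℝ) (hδ : 0 < δ)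
    (hcurv : 0 < v ⬝ᵥ (r - δ • v)) :
    ((B + (v ⬝ᵥ (r - δ • v))⁻¹ • vecMulVec (r - δ • v) (r - δ • v)
        - (v ⬝ᵥ B *ᵥ v)⁻¹ • vecMulVec (B *ᵥ v) (B *ᵥ v)
        + δ • (1 : Matrix (Fin n) (Fin n) ℝ))
      - δ • (1 : Matrix (Fin n) (Fin n) ℝ)).PosDef :=
  regularized_bfgs_update_posdef_general B hB v r δ hcurv
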